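/- arXiv:1912.03364 — 3 statements merged into one kernel-verified Lean document; each statement's English description precedes it below -/
import Mathlib

section
/- Let V be a 2p-dimensional vector space over F₂ equipped with a nondegenerate alternating bilinear form ω, and let U ⊆ V be a totally isotropic subspace of dimension p − r, 0 ≤ r ≤ p. Then the number of Lagrangian subspaces (maximal totally isotropic subspaces, of dimension p) of V containing U equals ∏_{s=1}^{r} (2^s + 1). -/
open Module Submodule

section Aux
variable {V : Type*} [AddCommGroup V] [Module (ZMod 2) V] [Module.Finite (ZMod 2) V]

lemma aux_finrank_map_mkQ (U U' : Submodule (ZMod 2) V) (h : U ≤ U') :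
    finrank (ZMod 2) (U'.map U.mkQ) + finrank (ZMod 2) U = finrank (ZMod 2) U' := by
  have h1 := LinearMap.finrank_range_add_finrank_ker (U.mkQ.comp U'.subtype)
  have h2 : LinearMap.range (U.mkQ.comp U'.subtype) = U'.map U.mkQ := by
    rw [LinearMap.range_comp, Submodule.range_subtype]
  have h3 : LinearMap.ker (U.mkQ.comp U'.subtype) = U.comap U'.subtype := by
    rw [LinearMap.ker_comp, Submodule.ker_mkQ]
  rw [h2, h3, (Submodule.comapSubtypeEquivOfLe h).finrank_eq] at h1
  exact h1

lemma aux_card_submodule (W : Type*) [AddCommGroup W] [Module (ZMod 2) W]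
    [Module.Finite (ZMod 2) W] : Nat.card W = 2 ^ finrank (ZMod 2) W := by
  have : Finite W := Module.finite_of_finite (ZMod 2)
  have : Fintype W := Fintype.ofFinite W
  rw [Nat.card_eq_fintype_card, card_eq_pow_finrank (K := ZMod 2), ZMod.card]

lemma zmod2_mem_span_singleton {W : Type*} [AddCommGroup W] [Module (ZMod 2) W]
    {x y : W} (h : y ∈ Submodule.span (ZMod 2) {x}) : y = 0 ∨ y = x := by
  rw [Submodule.mem_span_singleton] at h
  obtain ⟨c, rfl⟩ := h
  have : c = 0 ∨ c = 1 := by revert c; decide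
  rcases this with rfl | rfl
  · left; simp
  · right; simp

/-- number of intermediate subspaces of dimension one more -/
lemma count_intermediate (U W : Submodule (ZMod 2) V) (hUW : U ≤ W) :
    Nat.card {U' : Submodule (ZMod 2) V // U ≤ U' ∧ U' ≤ W ∧
      finrank (ZMod 2) U' = finrank (ZMod 2) U + 1} =
    2 ^ (finrank (ZMod 2) W - finrank (ZMod 2) U) - 1 := by
  classical
  set S : Submodule (ZMod 2) (V ⧸ U) := W.map U.mkQ with hS
  -- the bijection
  have key : Nat.card {x : V ⧸ U // x ∈ S ∧ x ≠ 0} =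
      Nat.card {U' : Submodule (ZMod 2) V // U ≤ U' ∧ U' ≤ W ∧
        finrank (ZMod 2) U' = finrank (ZMod 2) U + 1} := by
    have hcomap_rank : ∀ x : V ⧸ U, x ≠ 0 →
        finrank (ZMod 2) ((Submodule.span (ZMod 2) {x}).comap U.mkQ) =
          finrank (ZMod 2) U + 1 := by
      intro x hx
      have hle : U ≤ (Submodule.span (ZMod 2) {x}).comap U.mkQ := by
        intro u hu
        simp only [Submodule.mem_comap, Submodule.mkQ_apply]
        rw [Submodule.Quotient.mk_eq_zero U |>.2 hu]
        exact Submodule.zero_mem _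
      have h := aux_finrank_map_mkQ U _ hle
      rw [Submodule.map_comap_eq, Submodule.range_mkQ, top_inf_eq] at h
      rw [finrank_span_singleton hx] at h
      omega
    have hUle : ∀ x : V ⧸ U, U ≤ (Submodule.span (ZMod 2) {x}).comap U.mkQ := by
      intro x u hu
      simp only [Submodule.mem_comap, Submodule.mkQ_apply]
      rw [Submodule.Quotient.mk_eq_zero U |>.2 hu]
      exact Submodule.zero_mem _
    have hWle : ∀ x : {x : V ⧸ U // x ∈ S ∧ x ≠ 0},
        (Submodule.span (ZMod 2) {x.1}).comap U.mkQ ≤ W := by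
      rintro ⟨x, hxS, hx0⟩ v hv
      simp only [Submodule.mem_comap] at hv
      rcases zmod2_mem_span_singleton hv with h | h
      · rw [Submodule.mkQ_apply, Submodule.Quotient.mk_eq_zero] at h
        exact hUW h
      · obtain ⟨w, hw, hwx⟩ := hxS
        have hvw : v - w ∈ U := by
          rw [← Submodule.Quotient.eq]
          show U.mkQ v = U.mkQ w
          rw [h, hwx]
        have hv2 : v = (v - w) + w := by abel
        rw [hv2]
        exact W.add_mem (hUW hvw) hw
    refine Nat.card_eq_of_bijective
      (fun x => ⟨(Submodule.span (ZMod 2) {x.1}).comap U.mkQ, hUle x.1, hWle x,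
        hcomap_rank x.1 x.2.2⟩) ⟨?_, ?_⟩
    · -- injective
      rintro ⟨x, hxS, hx0⟩ ⟨y, hyS, hy0⟩ hxy
      simp only [Subtype.mk.injEq] at hxy ⊢
      have h5 := congrArg (Submodule.map U.mkQ) hxy
      rw [Submodule.map_comap_eq, Submodule.map_comap_eq, Submodule.range_mkQ,
        top_inf_eq, top_inf_eq] at h5
      have hx : x ∈ Submodule.span (ZMod 2) {y} := h5 ▸ Submodule.mem_span_singleton_self x
      rcases zmod2_mem_span_singleton hx with h | h
      · exact absurd h hx0
      · exact h
    · -- surjective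
      rintro ⟨U', hU1, hU2, hU3⟩
      have hm := aux_finrank_map_mkQ U U' hU1
      have hmr : finrank (ZMod 2) (U'.map U.mkQ) = 1 := by omega
      have hne : U'.map U.mkQ ≠ ⊥ := by
        intro h
        rw [h, finrank_bot] at hmr
        exact absurd hmr.symm one_ne_zero
      obtain ⟨x, hxm, hx0⟩ := Submodule.exists_mem_ne_zero_of_ne_bot hne
      refine ⟨⟨x, Submodule.map_mono hU2 hxm, hx0⟩, ?_⟩
      simp only [Subtype.mk.injEq]
      have hsp : Submodule.span (ZMod 2) {x} ≤ U'.map U.mkQ :=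
        (Submodule.span_le).2 (Set.singleton_subset_iff.2 hxm)
      have hle2 : (Submodule.span (ZMod 2) {x}).comap U.mkQ ≤ U' := by
        refine le_trans (Submodule.comap_mono hsp) ?_
        rw [Submodule.comap_map_eq, Submodule.ker_mkQ, sup_eq_left.2 hU1]
      exact Submodule.eq_of_le_of_finrank_le hle2 (by rw [hcomap_rank x hx0]; omega)
  rw [← key]
  have e1 : {y : ↥S // ((y : V ⧸ U) ≠ 0)} ≃ {x : V ⧸ U // x ∈ S ∧ x ≠ 0} :=
    Equiv.subtypeSubtypeEquivSubtypeInter (· ∈ S) (· ≠ 0)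
  have e2 : {y : ↥S // y ≠ (0 : ↥S)} ≃ {y : ↥S // ((y : V ⧸ U) ≠ 0)} :=
    Equiv.subtypeEquivRight (fun y => by simp [ne_eq, ZeroMemClass.coe_eq_zero])
  rw [Nat.card_congr (e2.trans e1).symm]
  have : Finite (V ⧸ U) := Module.finite_of_finite (ZMod 2)
  have : Fintype ↥S := Fintype.ofFinite _
  have : Fintype {y : ↥S // y ≠ (0 : ↥S)} := Fintype.ofFinite _
  rw [Nat.card_eq_fintype_card]
  have hcc : Fintype.card {y : ↥S // y ≠ (0 : ↥S)} = Fintype.card ↥S - 1 := by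
    classical
    convert Set.card_ne_eq (0 : ↥S) using 2
    rfl
  rw [hcc, ← Nat.card_eq_fintype_card, aux_card_submodule]
  have h4 := aux_finrank_map_mkQ U W hUW
  have h5 : finrank (ZMod 2) ↥S = finrank (ZMod 2) ↥W - finrank (ZMod 2) ↥U := by
    rw [hS]; omega
  rw [h5]


lemma zmod2_symm {V : Type*} [AddCommGroup V] [Module (ZMod 2) V]
    (ω : V →ₗ[ZMod 2] V →ₗ[ZMod 2] ZMod 2) (halt : ∀ v, ω v v = 0) :
    ∀ x y, ω x y = ω y x := by
  intro x y
  have h := halt (x + y)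
  simp only [map_add, LinearMap.add_apply, halt, zero_add, add_zero] at h
  have h' : ω x y + ω y x = 0 := by rw [add_comm]; exact h
  rw [show ω x y = -(ω y x) from eq_neg_of_add_eq_zero_left h', CharTwo.neg_eq]

/-- In a rank-one submodule over ZMod 2, membership trichotomy. -/
lemma zmod2_rank_one_cases {W : Type*} [AddCommGroup W] [Module (ZMod 2) W]
    [Module.Finite (ZMod 2) W] (M : Submodule (ZMod 2) W)
    (hM : finrank (ZMod 2) M = 1) {a b : W} (ha : a ∈ M) (hb : b ∈ M) :
    a = 0 ∨ b = 0 ∨ a = b := by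
  have hne : M ≠ ⊥ := by
    intro h; rw [h, finrank_bot] at hM; exact absurd hM.symm one_ne_zero
  obtain ⟨z, hz, hz0⟩ := Submodule.exists_mem_ne_zero_of_ne_bot hne
  have hsp : Submodule.span (ZMod 2) {z} = M := by
    refine Submodule.eq_of_le_of_finrank_le ?_ ?_
    · exact (Submodule.span_le).2 (Set.singleton_subset_iff.2 hz)
    · rw [finrank_span_singleton hz0, hM]
  rcases zmod2_mem_span_singleton (hsp ▸ ha : a ∈ Submodule.span (ZMod 2) {z}) with h1 | h1
  · exact Or.inl h1
  rcases zmod2_mem_span_singleton (hsp ▸ hb : b ∈ Submodule.span (ZMod 2) {z}) with h2 | h2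
  · exact Or.inr (Or.inl h2)
  · exact Or.inr (Or.inr (h1.trans h2.symm))

section Master
variable {V : Type*} [AddCommGroup V] [Module (ZMod 2) V] [Module.Finite (ZMod 2) V]

lemma nat_card_sigma {ι : Type*} [Fintype ι] (f : ι → Type*) [∀ i, Fintype (f i)] :
    Nat.card ((i : ι) × f i) = ∑ i : ι, Nat.card (f i) := by
  simp only [Nat.card_eq_fintype_card, Fintype.card_sigma]

lemma master (p : ℕ) (hdim : finrank (ZMod 2) V = 2 * p)
    (ω : V →ₗ[ZMod 2] V →ₗ[ZMod 2] ZMod 2)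
    (halt : ∀ v, ω v v = 0) (hnd : ∀ v, (∀ w, ω v w = 0) → v = 0) :
    ∀ r : ℕ, r ≤ p → ∀ U : Submodule (ZMod 2) V,
      (∀ x ∈ U, ∀ y ∈ U, ω x y = 0) → finrank (ZMod 2) U = p - r →
      Nat.card {L : Submodule (ZMod 2) V //
          U ≤ L ∧ (∀ x ∈ L, ∀ y ∈ L, ω x y = 0) ∧ finrank (ZMod 2) L = p} =
        ∏ s ∈ Finset.Icc 1 r, (2 ^ s + 1) := by
  classical
  have hsymm := zmod2_symm ω halt
  have hrefl : LinearMap.BilinForm.IsRefl ω := fun x y h => (hsymm x y) ▸ h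
  have hndeg : LinearMap.BilinForm.Nondegenerate ω :=
    ⟨hnd, fun y h => hnd y (fun w => (hsymm y w).trans (h w))⟩
  have hfinV : Finite V := Module.finite_of_finite (ZMod 2)
  have hfinSub : Finite (Submodule (ZMod 2) V) :=
    Finite.of_injective (fun s => (s : Set V)) SetLike.coe_injective
  have hfinSub' : Fintype (Submodule (ZMod 2) V) := Fintype.ofFinite _
  intro r
  induction r with
  | zero =>
    intro _ U hUiso hUdim
    rw [Finset.Icc_eq_empty (by omega), Finset.prod_empty]
    have hU : U ≤ U ∧ (∀ x ∈ U, ∀ y ∈ U, ω x y = 0) ∧ finrank (ZMod 2) U = p :=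
      ⟨le_refl U, hUiso, by omega⟩
    have : Unique {L : Submodule (ZMod 2) V //
        U ≤ L ∧ (∀ x ∈ L, ∀ y ∈ L, ω x y = 0) ∧ finrank (ZMod 2) L = p} := by
      refine ⟨⟨⟨U, hU⟩⟩, ?_⟩
      rintro ⟨L, h1, _, h3⟩
      exact Subtype.ext (Submodule.eq_of_le_of_finrank_le h1 (by omega)).symm
    exact Nat.card_unique
  | succ r ih =>
    intro hr U hUiso hUdim
    have hr' : r ≤ p := by omega
    set Uperp := LinearMap.BilinForm.orthogonal ω U with hUperp
    have hperp_rank : finrank (ZMod 2) Uperp = finrank (ZMod 2) V - finrank (ZMod 2) U :=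
      LinearMap.BilinForm.finrank_orthogonal hndeg U
    have hUle : U ≤ Uperp := fun x hx n hn => hUiso n hn x hx
    -- characterization of the intermediate subspaces
    have hAiff : ∀ U' : Submodule (ZMod 2) V,
        (U ≤ U' ∧ (∀ x ∈ U', ∀ y ∈ U', ω x y = 0) ∧ finrank (ZMod 2) U' = p - r) ↔
        (U ≤ U' ∧ U' ≤ Uperp ∧ finrank (ZMod 2) U' = finrank (ZMod 2) U + 1) := by
      intro U'
      constructor
      · rintro ⟨h1, h2, h3⟩
        exact ⟨h1, fun x hx n hn => h2 n (h1 hn) x hx, by omega⟩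
      · rintro ⟨h1, h2, h3⟩
        refine ⟨h1, ?_, by omega⟩
        intro x hx y hy
        have hmr : finrank (ZMod 2) (U'.map U.mkQ) = 1 := by
          have := aux_finrank_map_mkQ U U' h1; omega
        rcases zmod2_rank_one_cases (U'.map U.mkQ) hmr
            (Submodule.mem_map_of_mem hx) (Submodule.mem_map_of_mem hy) with h | h | h
        · -- x ∈ U
          have hxU : x ∈ U := by
            rwa [Submodule.mkQ_apply, Submodule.Quotient.mk_eq_zero] at h
          exact (h2 hy) x hxU
        · have hyU : y ∈ U := by
            rwa [Submodule.mkQ_apply, Submodule.Quotient.mk_eq_zero] at h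
          rw [hsymm]
          exact (h2 hx) y hyU
        · have hxy : x - y ∈ U := by
            rw [← Submodule.Quotient.eq]; exact h
          have : ω x y = ω ((x - y) + y) y := by rw [sub_add_cancel]
          rw [this, map_add, LinearMap.add_apply, halt,
            (h2 hy) (x - y) hxy, add_zero]
    -- the two subtype families
    set AA : Submodule (ZMod 2) V → Prop := fun U' =>
      U ≤ U' ∧ (∀ x ∈ U', ∀ y ∈ U', ω x y = 0) ∧ finrank (ZMod 2) U' = p - r with hAA
    set Lag : Submodule (ZMod 2) V → Prop := fun L =>
      U ≤ L ∧ (∀ x ∈ L, ∀ y ∈ L, ω x y = 0) ∧ finrank (ZMod 2) L = p with hLag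
    -- count of AA
    have cardAA : Nat.card {U' // AA U'} = 2 ^ (2 * (r + 1)) - 1 := by
      have : Nat.card {U' // AA U'} = Nat.card {U' : Submodule (ZMod 2) V //
          U ≤ U' ∧ U' ≤ Uperp ∧ finrank (ZMod 2) U' = finrank (ZMod 2) U + 1} :=
        Nat.card_congr (Equiv.subtypeEquivRight (fun U' => hAiff U'))
      rw [this, count_intermediate U Uperp hUle]
      have hUV : finrank (ZMod 2) U ≤ finrank (ZMod 2) V := Submodule.finrank_le U
      have hexp : finrank (ZMod 2) Uperp - finrank (ZMod 2) U = 2 * (r + 1) := by omega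
      rw [hexp]
    -- double counting
    have e1 : {q : Submodule (ZMod 2) V × Submodule (ZMod 2) V //
          AA q.1 ∧ Lag q.2 ∧ q.1 ≤ q.2} ≃
        (L : {L // Lag L}) × {U' // AA U' ∧ U' ≤ L.1} :=
      { toFun := fun q => ⟨⟨q.1.2, q.2.2.1⟩, ⟨q.1.1, q.2.1, q.2.2.2⟩⟩
        invFun := fun x => ⟨(x.2.1, x.1.1), x.2.2.1, x.1.2, x.2.2.2⟩
        left_inv := fun _ => rfl
        right_inv := fun _ => rfl }
    have e2 : {q : Submodule (ZMod 2) V × Submodule (ZMod 2) V //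
          AA q.1 ∧ Lag q.2 ∧ q.1 ≤ q.2} ≃
        (U' : {U' // AA U'}) × {L // Lag L ∧ U'.1 ≤ L} :=
      { toFun := fun q => ⟨⟨q.1.1, q.2.1⟩, ⟨q.1.2, q.2.2.1, q.2.2.2⟩⟩
        invFun := fun x => ⟨(x.1.1, x.2.1), x.1.2, x.2.2.1, x.2.2.2⟩
        left_inv := fun _ => rfl
        right_inv := fun _ => rfl }
    -- fiber over L
    have fiberL : ∀ L : {L // Lag L},
        Nat.card {U' // AA U' ∧ U' ≤ L.1} = 2 ^ (r + 1) - 1 := by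
      rintro ⟨L, hL1, hL2, hL3⟩
      have : Nat.card {U' // AA U' ∧ U' ≤ L} = Nat.card {U' : Submodule (ZMod 2) V //
          U ≤ U' ∧ U' ≤ L ∧ finrank (ZMod 2) U' = finrank (ZMod 2) U + 1} := by
        refine Nat.card_congr (Equiv.subtypeEquivRight (fun U' => ?_))
        rw [hAA]
        constructor
        · rintro ⟨⟨h1, h2, h3⟩, h4⟩
          exact ⟨h1, h4, by omega⟩
        · rintro ⟨h1, h2, h3⟩
          exact ⟨⟨h1, fun x hx y hy => hL2 x (h2 hx) y (h2 hy), by omega⟩, h2⟩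
      rw [this, count_intermediate U L hL1]
      have hexp : finrank (ZMod 2) L - finrank (ZMod 2) U = r + 1 := by omega
      rw [hexp]
    -- fiber over U'
    have fiberU : ∀ U' : {U' // AA U'},
        Nat.card {L // Lag L ∧ U'.1 ≤ L} = ∏ s ∈ Finset.Icc 1 r, (2 ^ s + 1) := by
      rintro ⟨U', hU1, hU2, hU3⟩
      have : Nat.card {L // Lag L ∧ U' ≤ L} = Nat.card {L : Submodule (ZMod 2) V //
          U' ≤ L ∧ (∀ x ∈ L, ∀ y ∈ L, ω x y = 0) ∧ finrank (ZMod 2) L = p} := by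
        refine Nat.card_congr (Equiv.subtypeEquivRight (fun L => ?_))
        rw [hLag]
        constructor
        · rintro ⟨⟨h1, h2, h3⟩, h4⟩
          exact ⟨h4, h2, h3⟩
        · rintro ⟨h1, h2, h3⟩
          exact ⟨⟨le_trans hU1 h1, h2, h3⟩, h1⟩
      rw [this]
      exact ih hr' U' hU2 hU3
    -- put it together
    have hcount1 : Nat.card {q : Submodule (ZMod 2) V × Submodule (ZMod 2) V //
          AA q.1 ∧ Lag q.2 ∧ q.1 ≤ q.2} =
        Nat.card {L // Lag L} * (2 ^ (r + 1) - 1) := by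
      haveI : ∀ L : {L // Lag L}, Fintype {U' // AA U' ∧ U' ≤ L.1} :=
        fun L => Fintype.ofFinite _
      haveI : Fintype {L // Lag L} := Fintype.ofFinite _
      rw [Nat.card_congr e1, nat_card_sigma]
      simp only [fiberL]
      rw [Finset.sum_const, Finset.card_univ, ← Nat.card_eq_fintype_card, smul_eq_mul]
    have hcount2 : Nat.card {q : Submodule (ZMod 2) V × Submodule (ZMod 2) V //
          AA q.1 ∧ Lag q.2 ∧ q.1 ≤ q.2} =
        (2 ^ (2 * (r + 1)) - 1) * ∏ s ∈ Finset.Icc 1 r, (2 ^ s + 1) := by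
      haveI : ∀ U' : {U' // AA U'}, Fintype {L // Lag L ∧ U'.1 ≤ L} :=
        fun U' => Fintype.ofFinite _
      haveI : Fintype {U' // AA U'} := Fintype.ofFinite _
      rw [Nat.card_congr e2, nat_card_sigma]
      simp only [fiberU]
      rw [Finset.sum_const, Finset.card_univ, ← Nat.card_eq_fintype_card, smul_eq_mul,
        cardAA]
    rw [hcount2] at hcount1
    -- arithmetic
    have hpow : (1 : ℕ) ≤ 2 ^ (r + 1) := Nat.one_le_two_pow
    have hfact : 2 ^ (2 * (r + 1)) - 1 = (2 ^ (r + 1) - 1) * (2 ^ (r + 1) + 1) := by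
      have h2 : 2 ^ (2 * (r + 1)) = 2 ^ (r + 1) * 2 ^ (r + 1) := by
        rw [two_mul, pow_add]
      rw [h2]
      obtain ⟨k, hk⟩ := Nat.exists_eq_add_of_le hpow
      rw [hk]
      have h3 : (1 + k) * (1 + k) = k * (1 + k + 1) + 1 := by ring
      have h4 : 1 + k - 1 = k := by omega
      rw [h3, h4]
      omega
    rw [hfact] at hcount1
    have hprod : ∏ s ∈ Finset.Icc 1 (r + 1), (2 ^ s + 1) =
        (2 ^ (r + 1) + 1) * ∏ s ∈ Finset.Icc 1 r, (2 ^ s + 1) := by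
      rw [Finset.prod_Icc_succ_top (by omega), mul_comm]
    have hgoal : Nat.card {L : Submodule (ZMod 2) V //
        U ≤ L ∧ (∀ x ∈ L, ∀ y ∈ L, ω x y = 0) ∧ finrank (ZMod 2) L = p} =
        Nat.card {L // Lag L} := rfl
    rw [hgoal, hprod]
    have hpos : 0 < 2 ^ (r + 1) - 1 := by
      have : (2:ℕ) ≤ 2 ^ (r + 1) := by
        calc (2:ℕ) = 2 ^ 1 := rfl
        _ ≤ 2 ^ (r + 1) := Nat.pow_le_pow_right (by norm_num) (by omega)
      omega
    refine Nat.eq_of_mul_eq_mul_right hpos ?_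
    rw [← hcount1]
    ring

end Master

end Aux



theorem stmt_2 {V : Type*} [AddCommGroup V] [Module (ZMod 2) V]
    [Module.Finite (ZMod 2) V]
    (p r : ℕ) (hr : r ≤ p) (hdim : Module.finrank (ZMod 2) V = 2 * p)
    (ω : V →ₗ[ZMod 2] V →ₗ[ZMod 2] ZMod 2)
    (halt : ∀ v, ω v v = 0)
    (hnd : ∀ v, (∀ w, ω v w = 0) → v = 0)
    (U : Submodule (ZMod 2) V)
    (hUiso : ∀ x ∈ U, ∀ y ∈ U, ω x y = 0)
    (hUdim : Module.finrank (ZMod 2) U = p - r) :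
    Nat.card {L : Submodule (ZMod 2) V //
        U ≤ L ∧ (∀ x ∈ L, ∀ y ∈ L, ω x y = 0) ∧
          Module.finrank (ZMod 2) L = p} =
      ∏ s ∈ Finset.Icc 1 r, (2 ^ s + 1) := by
  exact master p hdim ω halt hnd r hr U hUiso hUdim
end

section
/- Let V be an F₂-vector space of dimension 2p with p ≥ 2, equipped with a nondegenerate alternating bilinear form ω. Suppose V ∖ {0} is partitioned into disjoint subsets T and P such that for all nonzero x, y with ω(x,y) = 1: if x, y ∈ T then x + y ∈ T; if x ∈ T and y ∈ P (or x ∈ P and y ∈ T) then x + y ∈ P; and if x, y ∈ P then x + y ∈ T. Then it cannot happen simultaneously that there exist distinct x₁, y₁ ∈ P with ω(x₁,y₁) = 0 and x₁ + y₁ ∈ P, and distinct x₂, y₂ ∈ P with ω(x₂,y₂) = 0 and x₂ + y₂ ∈ T. In other words, either every sum of two distinct ω-orthogonal elements of P lies in T, or every such sum lies in P. -/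
/-!
Call a commuting pair `x, y ∈ P` even or odd according as `x + y` lies in `P` or in `T`.
The bracket rules give an exchange principle: if `x, z ∈ P` anticommute and `y` pairs in the
same way with `x` and with `z`, then `x + y` and `z + y` lie in the same part. Two commuting pairs
`{u, c}` and `{v, c}` sharing an element therefore have the same parity: if `u` and `v`
anticommute this is one exchange, and otherwise nondegeneracy provides `z ∈ P` anticommuting
with `u` and `v` but commuting with `c`, through which two exchanges connect the pairs. Finally,
once an even pair `{x, y}` exists, every `b ∈ P` lies in an even commuting pair, obtained by
exchanging `x` or `y` (possibly via such an auxiliary `z`) for `b`; so no odd pair exists.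
-/

theorem ZMod.eq_zero_or_eq_one_mod_two (a : ZMod 2) : a = 0 ∨ a = 1 := by
  revert a; decide

theorem LinearMap.IsAlt.apply_comm {R M : Type*} [CommRing R] [CharP R 2] [AddCommGroup M]
    [Module R M] {B : M →ₗ[R] M →ₗ[R] R} (hB : B.IsAlt) (x y : M) : B x y = B y x := by
  rw [← hB.neg, CharTwo.neg_eq]

theorem LinearMap.SeparatingLeft.exists_forall_apply_eq {K V W ι : Type*} [Field K]
    [AddCommGroup V] [Module K V] [AddCommGroup W] [Module K W] [Fintype ι]
    {B : V →ₗ[K] W →ₗ[K] K} (hB : B.SeparatingLeft) {u : ι → V}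
    (hu : LinearIndependent K u) (ε : ι → K) : ∃ w, ∀ i, B (u i) w = ε i := by
  classical
  let L : W →ₗ[K] ι → K := LinearMap.pi fun i ↦ B (u i)
  suffices Function.Surjective L from (this ε).imp fun w hw i ↦ congr_fun hw i
  rw [← LinearMap.range_eq_top]
  by_contra hL
  obtain ⟨f, hf, hLf⟩ := (LinearMap.range L).exists_le_ker_of_lt_top (lt_top_iff_ne_top.2 hL)
  -- a functional vanishing on the range of `L` is a linear relation among the `u i`
  have hrel : ∑ i, f (fun j ↦ if i = j then 1 else 0) • u i = 0 := hB _ fun w ↦ by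
    have := hLf ⟨w, rfl⟩
    rw [LinearMap.mem_ker, LinearMap.pi_apply_eq_sum_univ] at this
    simpa [L, mul_comm] using this
  have hc := Fintype.linearIndependent_iff.1 hu _ hrel
  exact hf (LinearMap.ext fun x ↦ by simp [LinearMap.pi_apply_eq_sum_univ f x, hc])

theorem ZModModule.linearIndependent_three {V : Type*} [AddCommGroup V] [Module (ZMod 2) V]
    {x y z : V} (hx : x ≠ 0) (hy : y ≠ 0) (hz : z ≠ 0) (hxy : x ≠ y) (hxz : x ≠ z)
    (hyz : y ≠ z) (hxyz : x + y ≠ z) : LinearIndependent (ZMod 2) ![x, y, z] := by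
  rw [Fintype.linearIndependent_iff]
  intro g hg
  rcases (g 0).eq_zero_or_eq_one_mod_two with h0 | h0 <;>
    rcases (g 1).eq_zero_or_eq_one_mod_two with h1 | h1 <;>
    rcases (g 2).eq_zero_or_eq_one_mod_two with h2 | h2 <;>
    simp_all [Fin.sum_univ_three, Fin.forall_fin_succ, add_eq_zero_iff_eq_neg,
      ZModModule.neg_eq_self]

section

variable {V : Type*} [AddCommGroup V] [Module (ZMod 2) V]
  {ω : V →ₗ[ZMod 2] V →ₗ[ZMod 2] ZMod 2} {T P : Set V} {x y z b : V}

theorem LinearMap.IsAlt.apply_add_add_eq_one (hω : ω.IsAlt) (hxz : ω x z = 1)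
    (hy : ω x y = ω z y) : ω (x + y) (x + z) = 1 := by
  simp [hω.self_eq_zero, hxz, hω.apply_comm y, hy, CharTwo.add_self_eq_zero]

/-- `T` and `P` are the Pauli strings in `𝔱` and `𝔭`; `ω x y = 1` means that `x` and `y`
anticommute, and their commutator is then a multiple of the Pauli string `x + y`. -/
structure IsCartanPartition (ω : V →ₗ[ZMod 2] V →ₗ[ZMod 2] ZMod 2) (T P : Set V) : Prop where
  union_eq : T ∪ P = {v | v ≠ 0}
  inter_eq : T ∩ P = ∅
  add_mem_T_of_T_T : ∀ x ∈ T, ∀ y ∈ T, ω x y = 1 → x + y ∈ T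
  add_mem_P_of_P_T : ∀ x ∈ P, ∀ y ∈ T, ω x y = 1 → x + y ∈ P
  add_mem_T_of_P_P : ∀ x ∈ P, ∀ y ∈ P, ω x y = 1 → x + y ∈ T

namespace IsCartanPartition

theorem ne_zero_of_mem_P (h : IsCartanPartition ω T P) (hx : x ∈ P) : x ≠ 0 :=
  h.union_eq.le (.inr hx)

theorem ne_zero_of_mem_T (h : IsCartanPartition ω T P) (hx : x ∈ T) : x ≠ 0 :=
  h.union_eq.le (.inl hx)

theorem mem_T_or_mem_P (h : IsCartanPartition ω T P) (hx : x ≠ 0) : x ∈ T ∨ x ∈ P :=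
  h.union_eq.ge hx

theorem notMem_P_of_mem_T (h : IsCartanPartition ω T P) (hx : x ∈ T) : x ∉ P :=
  fun hxP ↦ h.inter_eq.le ⟨hx, hxP⟩

theorem ne_of_add_mem_P (h : IsCartanPartition ω T P) (hxy : x + y ∈ P) : x ≠ y := by
  rintro rfl
  exact h.ne_zero_of_mem_P hxy (ZModModule.add_self x)

theorem ne_of_add_mem_T (h : IsCartanPartition ω T P) (hxy : x + y ∈ T) : x ≠ y := by
  rintro rfl
  exact h.ne_zero_of_mem_T hxy (ZModModule.add_self x)

theorem add_mem_P_of_add_mem_P (h : IsCartanPartition ω T P) (hω : ω.IsAlt) (hx : x ∈ P)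
    (hz : z ∈ P) (hxz : ω x z = 1) (hy : ω x y = ω z y) (hxy : x + y ∈ P) : z + y ∈ P := by
  have := h.add_mem_P_of_P_T _ hxy _ (h.add_mem_T_of_P_P x hx z hz hxz)
    (hω.apply_add_add_eq_one hxz hy)
  rwa [add_comm x y, ZModModule.add_add_add_cancel, add_comm] at this

theorem add_mem_T_of_add_mem_T (h : IsCartanPartition ω T P) (hω : ω.IsAlt) (hx : x ∈ P)
    (hz : z ∈ P) (hxz : ω x z = 1) (hy : ω x y = ω z y) (hxy : x + y ∈ T) : z + y ∈ T := by
  have := h.add_mem_T_of_T_T _ hxy _ (h.add_mem_T_of_P_P x hx z hz hxz)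
    (hω.apply_add_add_eq_one hxz hy)
  rwa [add_comm x y, ZModModule.add_add_add_cancel, add_comm] at this

theorem exists_mem_P_forall_apply_eq (h : IsCartanPartition ω T P) (hx : x ∈ P)
    (hxz : ω x z = 1) : ∃ z' ∈ P, ∀ w, ω w x = 0 → ω w z' = ω w z := by
  rcases h.mem_T_or_mem_P (x := z) (by rintro rfl; simp at hxz) with hzT | hzP
  · exact ⟨x + z, h.add_mem_P_of_P_T x hx z hzT hxz, fun w hw ↦ by simp [hw]⟩
  · exact ⟨z, hzP, fun _ _ ↦ rfl⟩

theorem exists_mem_P_apply_eq (h : IsCartanPartition ω T P) (hω : ω.IsAlt)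
    (hnd : ω.SeparatingLeft) (hind : LinearIndependent (ZMod 2) ![x, y, b]) (hx : x ∈ P)
    (hyx : ω y x = 0) (hbx : ω b x = 0) (ε₂ ε₃ : ZMod 2) :
    ∃ z ∈ P, ω x z = 1 ∧ ω y z = ε₂ ∧ ω b z = ε₃ := by
  obtain ⟨z, hz⟩ := hnd.exists_forall_apply_eq hind ![1, ε₂, ε₃]
  obtain ⟨z', hz'P, hz'⟩ := h.exists_mem_P_forall_apply_eq hx (hz 0)
  exact ⟨z', hz'P, (hz' x (hω x)).trans (hz 0), (hz' y hyx).trans (hz 1),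
    (hz' b hbx).trans (hz 2)⟩

theorem add_notMem_T_of_add_mem_P (h : IsCartanPartition ω T P) (hω : ω.IsAlt)
    (hnd : ω.SeparatingLeft) {u v c : V} (hu : u ∈ P) (hv : v ∈ P) (hc : c ∈ P)
    (huc : ω u c = 0) (hvc : ω v c = 0) (hucP : u + c ∈ P) : v + c ∉ T := by
  intro hvcT
  rcases (ω v u).eq_zero_or_eq_one_mod_two with hvu | hvu
  · have huv : u ≠ v := by
      rintro rfl
      exact h.notMem_P_of_mem_T hvcT hucP
    have hc_ne : u + v ≠ c := by
      rintro rfl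
      refine h.notMem_P_of_mem_T ?_ hu
      simpa [add_left_comm v u, ZModModule.add_self] using hvcT
    have hind := ZModModule.linearIndependent_three (h.ne_zero_of_mem_P hu)
      (h.ne_zero_of_mem_P hv) (h.ne_zero_of_mem_P hc) huv (h.ne_of_add_mem_P hucP)
      (h.ne_of_add_mem_T hvcT) hc_ne
    obtain ⟨z, hz, huz, hvz, hcz⟩ :=
      h.exists_mem_P_apply_eq hω hnd hind hu hvu ((hω.apply_comm c u).trans huc) 1 0
    have hzc : ω z c = 0 := (hω.apply_comm z c).trans hcz
    exact h.notMem_P_of_mem_T (h.add_mem_T_of_add_mem_T hω hv hz hvz (hvc.trans hzc.symm) hvcT)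
      (h.add_mem_P_of_add_mem_P hω hu hz huz (huc.trans hzc.symm) hucP)
  · exact h.notMem_P_of_mem_T
      (h.add_mem_T_of_add_mem_T hω hv hu hvu (hvc.trans huc.symm) hvcT) hucP

theorem exists_add_mem_P_of_add_mem_P (h : IsCartanPartition ω T P) (hω : ω.IsAlt)
    (hnd : ω.SeparatingLeft) (hx : x ∈ P) (hy : y ∈ P) (hxy : ω x y = 0) (hxyP : x + y ∈ P)
    (hb : b ∈ P) : ∃ w ∈ P, ω w b = 0 ∧ w + b ∈ P := by
  have hswap : ∀ x y, x ∈ P → y ∈ P → ω x y = 0 → x + y ∈ P → ω x b = 1 → ω y b = 0 →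
      ∃ w ∈ P, ω w b = 0 ∧ w + b ∈ P := fun x y hx hy hxy hxyP hxb hyb ↦
    ⟨y, hy, hyb, add_comm b y ▸ h.add_mem_P_of_add_mem_P hω hx hb hxb
      (hxy.trans ((hω.apply_comm b y).trans hyb).symm) hxyP⟩
  have hyx : ω y x = 0 := (hω.apply_comm y x).trans hxy
  rcases (ω x b).eq_zero_or_eq_one_mod_two with hxb | hxb <;>
    rcases (ω y b).eq_zero_or_eq_one_mod_two with hyb | hyb
  · by_cases hdeg : b = x ∨ b = y ∨ b = x + y
    · rcases hdeg with hbx | hby | hbxy <;> subst b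
      · exact ⟨y, hy, hyx, add_comm x y ▸ hxyP⟩
      · exact ⟨x, hx, hxy, hxyP⟩
      · refine ⟨x, hx, by simp [hω.self_eq_zero, hxy], ?_⟩
        simpa [← add_assoc, ZModModule.add_self]
    push Not at hdeg
    have hind := ZModModule.linearIndependent_three (h.ne_zero_of_mem_P hx)
      (h.ne_zero_of_mem_P hy) (h.ne_zero_of_mem_P hb) (h.ne_of_add_mem_P hxyP)
      hdeg.1.symm hdeg.2.1.symm hdeg.2.2.symm
    obtain ⟨z, hz, hxz, hyz, hbz⟩ :=
      h.exists_mem_P_apply_eq hω hnd hind hx hyx ((hω.apply_comm b x).trans hxb) 0 1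
    have hzy : ω z y = 0 := (hω.apply_comm z y).trans hyz
    exact hswap z y hz hy hzy (h.add_mem_P_of_add_mem_P hω hx hz hxz (hxy.trans hzy.symm) hxyP)
      ((hω.apply_comm z b).trans hbz) hyb
  · exact hswap y x hy hx hyx (add_comm x y ▸ hxyP) hyb hxb
  · exact hswap x y hx hy hxy hxyP hxb hyb
  -- `{x, x + y}` is again an even pair, and `b` commutes with `x + y`
  · refine hswap x (x + y) hx hxyP (by simp [hω.self_eq_zero, hxy]) ?_ hxb
      (by simp [hxb, hyb, CharTwo.add_self_eq_zero])
    simpa [← add_assoc, ZModModule.add_self]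

end IsCartanPartition

end

theorem stmt_13_general {V : Type*} [AddCommGroup V] [Module (ZMod 2) V]
    (ω : V →ₗ[ZMod 2] V →ₗ[ZMod 2] ZMod 2)
    (halt : ∀ v, ω v v = 0)
    (hnd : ∀ v, (∀ w, ω v w = 0) → v = 0)
    (T P : Set V)
    (hcover : T ∪ P = {v : V | v ≠ 0})
    (hdisj : T ∩ P = ∅)
    (hTT : ∀ x ∈ T, ∀ y ∈ T, ω x y = 1 → x + y ∈ T)
    (hPT : ∀ x ∈ P, ∀ y ∈ T, ω x y = 1 → x + y ∈ P)
    (hPP : ∀ x ∈ P, ∀ y ∈ P, ω x y = 1 → x + y ∈ T) :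
    ¬ ((∃ x ∈ P, ∃ y ∈ P, x ≠ y ∧ ω x y = 0 ∧ x + y ∈ P) ∧
       (∃ x ∈ P, ∃ y ∈ P, x ≠ y ∧ ω x y = 0 ∧ x + y ∈ T)) := by
  have h : IsCartanPartition ω T P := ⟨hcover, hdisj, hTT, hPT, hPP⟩
  rintro ⟨⟨x, hx, y, hy, -, hxy, hxyP⟩, ⟨a, ha, b, hb, -, hab, habT⟩⟩
  obtain ⟨w, hw, hwb, hwbP⟩ := h.exists_add_mem_P_of_add_mem_P halt hnd hx hy hxy hxyP hb
  exact h.add_notMem_T_of_add_mem_P halt hnd hw ha hb hwb hab hwbP habT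

theorem stmt_13 {V : Type*} [AddCommGroup V] [Module (ZMod 2) V]
    [Module.Finite (ZMod 2) V]
    (p : ℕ) (hp : 2 ≤ p) (hdim : Module.finrank (ZMod 2) V = 2 * p)
    (ω : V →ₗ[ZMod 2] V →ₗ[ZMod 2] ZMod 2)
    (halt : ∀ v, ω v v = 0)
    (hnd : ∀ v, (∀ w, ω v w = 0) → v = 0)
    (T P : Set V)
    (hcover : T ∪ P = {v : V | v ≠ 0})
    (hdisj : T ∩ P = ∅)
    (hTT : ∀ x ∈ T, ∀ y ∈ T, ω x y = 1 → x + y ∈ T)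
    (hTP : ∀ x ∈ T, ∀ y ∈ P, ω x y = 1 → x + y ∈ P)
    (hPT : ∀ x ∈ P, ∀ y ∈ T, ω x y = 1 → x + y ∈ P)
    (hPP : ∀ x ∈ P, ∀ y ∈ P, ω x y = 1 → x + y ∈ T) :
    ¬ ((∃ x ∈ P, ∃ y ∈ P, x ≠ y ∧ ω x y = 0 ∧ x + y ∈ P) ∧
       (∃ x ∈ P, ∃ y ∈ P, x ≠ y ∧ ω x y = 0 ∧ x + y ∈ T)) :=
  stmt_13_general ω halt hnd T P hcover hdisj hTT hPT hPP
end

section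
/- For p ≥ 1, the number of pairs (ζ, α) ∈ F₂^p × F₂^p satisfying ζ·α + ζ₁ + α₁ = 1 (mod 2), where ζ₁ and α₁ denote the first coordinates of ζ and α, equals 2^{p−1}(2^p + 1). -/
/-!
Translating both vectors by the basis vector `e₀` turns the condition into `ζ ⬝ᵥ α = 0`, since
`(ζ + e₀) ⬝ᵥ (α + e₀) = ζ ⬝ᵥ α + ζ₀ + α₀ + 1` and `-1 = 1` in `F₂`. Every `α` is orthogonal to
`ζ = 0`, while for `ζ ≠ 0` the orthogonal vectors form the kernel of a nonzero functional, a
hyperplane with `2^(p-1)` elements. Hence the count is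
`2^p + (2^p - 1) 2^(p-1) = 2^(p-1) (2^p + 1)`.
-/

/-- The `F₂` inner product `ζ·α = Σᵢ ζᵢαᵢ mod 2`. -/
def pdot {p : ℕ} (ζ α : Fin p → ZMod 2) : ZMod 2 := ∑ i, ζ i * α i

open Finset

theorem Module.Dual.card_mul_card_filter_apply_eq_zero {K V : Type*} [Field K] [Fintype K]
    [DecidableEq K] [AddCommGroup V] [Module K V] [Fintype V]
    {f : Module.Dual K V} (hf : f ≠ 0) :
    Fintype.card K * #{v | f v = 0} = Fintype.card V := by
  have hker : #{v | f v = 0} = Nat.card (LinearMap.ker f) := by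
    rw [← Fintype.card_subtype, ← Nat.card_eq_fintype_card]
    rfl
  rw [hker, Module.natCard_eq_pow_finrank (K := K), Nat.card_eq_fintype_card (α := K),
    Module.card_eq_pow_finrank (K := K) (V := V),
    ← f.finrank_ker_add_one_of_ne_zero hf, pow_succ, mul_comm]

section DotProduct

variable {K ι : Type*} [Field K] [Fintype K] [DecidableEq K] [Fintype ι] [DecidableEq ι]

theorem card_mul_card_filter_dotProduct_eq_zero_of_ne_zero {v : ι → K} (hv : v ≠ 0) :
    Fintype.card K * #{w | v ⬝ᵥ w = 0} = Fintype.card K ^ Fintype.card ι := by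
  have hf : dotProductEquiv K ι v ≠ 0 := by simpa using hv
  simpa using (Module.Dual.card_mul_card_filter_apply_eq_zero hf)

theorem card_mul_card_filter_dotProduct_eq_zero :
    Fintype.card K * #{x : (ι → K) × (ι → K) | x.1 ⬝ᵥ x.2 = 0} =
      Fintype.card K ^ Fintype.card ι * (Fintype.card K ^ Fintype.card ι + Fintype.card K - 1) := by
  set q := Fintype.card K
  set N := q ^ Fintype.card ι
  have hfibers :
      #{x : (ι → K) × (ι → K) | x.1 ⬝ᵥ x.2 = 0} = ∑ v : ι → K, #{w | v ⬝ᵥ w = 0} := by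
    simp only [card_filter, Fintype.sum_prod_type]
  have hzero : #{w : ι → K | 0 ⬝ᵥ w = 0} = N := by simp [N, q]
  have hN : 1 ≤ N := Nat.one_le_pow _ _ Fintype.card_pos
  rw [hfibers, mul_sum, ← add_sum_erase _ _ (mem_univ 0), hzero, sum_congr rfl fun v hv =>
      card_mul_card_filter_dotProduct_eq_zero_of_ne_zero (ne_of_mem_erase hv),
    sum_const, card_erase_of_mem (mem_univ _), card_univ, Fintype.card_fun, smul_eq_mul]
  change q * N + (N - 1) * N = N * (N + q - 1)
  zify [hN, le_add_right hN]
  ring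

end DotProduct

theorem card_filter_dotProduct_add_apply_add_apply_eq_neg_one {R ι : Type*} [CommRing R]
    [Fintype R] [DecidableEq R] [Fintype ι] [DecidableEq ι] (i : ι) :
    #{x : (ι → R) × (ι → R) | x.1 ⬝ᵥ x.2 + x.1 i + x.2 i = -1} =
      #{x : (ι → R) × (ι → R) | x.1 ⬝ᵥ x.2 = 0} := by
  refine card_equiv (Equiv.addRight (Pi.single i 1, Pi.single i 1)) fun x => ?_
  simp only [mem_filter, mem_univ, true_and, Equiv.coe_addRight, Prod.fst_add, Prod.snd_add,
    add_dotProduct, dotProduct_add, dotProduct_single, single_dotProduct, Pi.add_apply,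
    Pi.single_eq_same, mul_one, one_mul]
  constructor <;> intro h <;> linear_combination h

theorem stmt_16 (p : ℕ) (hp : 1 ≤ p) :
    (Finset.univ.filter fun za : (Fin p → ZMod 2) × (Fin p → ZMod 2) =>
        pdot za.1 za.2 + za.1 ⟨0, hp⟩ + za.2 ⟨0, hp⟩ = 1).card =
      2 ^ (p - 1) * (2 ^ p + 1) := by
  have hshift :=
    card_filter_dotProduct_add_apply_add_apply_eq_neg_one (R := ZMod 2) (⟨0, hp⟩ : Fin p)
  rw [show (-1 : ZMod 2) = 1 from rfl] at hshift
  have hcount := card_mul_card_filter_dotProduct_eq_zero (K := ZMod 2) (ι := Fin p)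
  simp only [ZMod.card, Fintype.card_fin, Nat.add_sub_assoc one_le_two] at hcount
  refine hshift.trans (Nat.eq_of_mul_eq_mul_left two_pos (hcount.trans ?_))
  obtain ⟨n, rfl⟩ := Nat.exists_eq_add_of_le' hp
  rw [Nat.add_sub_cancel, pow_succ]
  ring
end
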